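/- For every x ∈ X, every t ≥ 0 and every n ∈ ℕ₀, one has ∫_{X̄} 1_{[0,t]}(s) e^{−Λ(u,j,t−s)} P̄ⁿ((x,0), d(u,j,s)) ≤ e^{−λ̲ t} (λ̄ t)ⁿ / n!. (Probabilistically, this quantity is the probability that exactly n jumps of the piecewise deterministic Markov process occur up to time t, starting from x with zero initial clock.) -/

import Mathlib

/-!
Write `p_n(τ) = e^{-λ̲τ} (λ̄τ)ⁿ / n!` for `τ ≥ 0` and `p_n(τ) = 0` for `τ < 0`. Since
`λ̲ ≤ λ ≤ λ̄`, the jump density `λ(S_i(r,y)) e^{-Λ(y,i,r)}` is at most `λ̄ e^{-λ̲ r}`, so whatever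
the current state, the law of the waiting time to the next jump of `P̄` is dominated by the measure
`λ̄ e^{-λ̲ r} dr` on `(0, ∞)`. Integrating `p_n(t - s - ·)` against this measure gives exactly
`p_{n+1}(t - s)`, so by induction `∫ p_0(t - s') P̄ⁿ((y,i,s), d(u,j,s')) ≤ p_n(t - s)`. Finally
`Λ(u,j,τ) ≥ λ̲ τ` bounds the integrand of the theorem by `p_0(t - s)`, and `s = 0` gives the claim.
-/

open MeasureTheory ProbabilityTheory Real Set Filter Topology

noncomputable section

/-- The operator `f ↦ (x ↦ ∫ f dκ(x))` iterated `n` times. -/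
def kernelOpIter {Z : Type*} [MeasurableSpace Z] (κ : Kernel Z Z) :
    ℕ → (Z → ℝ) → Z → ℝ
  | 0, f => f
  | n + 1, f => fun z => ∫ w, kernelOpIter κ n f w ∂(κ z)

/-- The `n`-fold iterate of a kernel (`n = 0` giving the identity kernel). -/
def kIter {Z : Type*} [MeasurableSpace Z] (κ : Kernel Z Z) : ℕ → Kernel Z Z
  | 0 => Kernel.id
  | n + 1 => κ ∘ₖ kIter κ n

/-- `Λ(y,i,t) = ∫₀ᵗ λ(S_i(h,y)) dh`. -/
def cumInt {Y I : Type*} (S : I → ℝ → Y → Y) (lam : Y → ℝ) (y : Y) (i : I) (t : ℝ) : ℝ :=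
  ∫ h in (0:ℝ)..t, lam (S i h y)

/-- `G((y,i),A) = ∫₀^∞ λ(S_i(t,y)) e^{−Λ(y,i,t)} 1_A(S_i(t,y),i) dt`. -/
def Gker {Y I : Type*} (S : I → ℝ → Y → Y) (lam : Y → ℝ)
    (x : Y × I) (A : Set (Y × I)) : ℝ :=
  ∫ t in Ioi (0:ℝ), lam (S x.2 t x.1) * exp (-(cumInt S lam x.1 x.2 t)) *
    A.indicator (fun _ => (1:ℝ)) (S x.2 t x.1, x.2)

/-- `G̃((y,i),A) = ∫₀^∞ e^{−Λ(y,i,t)} 1_A(S_i(t,y),i) dt`. -/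
def Gtil {Y I : Type*} (S : I → ℝ → Y → Y) (lam : Y → ℝ)
    (x : Y × I) (A : Set (Y × I)) : ℝ :=
  ∫ t in Ioi (0:ℝ), exp (-(cumInt S lam x.1 x.2 t)) *
    A.indicator (fun _ => (1:ℝ)) (S x.2 t x.1, x.2)

/-- `W((y,i),A) = ∫_Y Σ_j π_{ij}(u) 1_A(u,j) J(y,du)`. -/
def Wker {Y I : Type*} [MeasurableSpace Y] [Fintype I]
    (pm : I → I → Y → ℝ) (J : Kernel Y Y) (x : Y × I) (A : Set (Y × I)) : ℝ :=
  ∫ u, ∑ j, pm x.2 j u * A.indicator (fun _ => (1:ℝ)) (u, j) ∂(J x.1)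

/-- `W̃((y,i),A) = λ(y)·W((y,i),A)`. -/
def Wtil {Y I : Type*} [MeasurableSpace Y] [Fintype I] (lam : Y → ℝ)
    (pm : I → I → Y → ℝ) (J : Kernel Y Y) (x : Y × I) (A : Set (Y × I)) : ℝ :=
  lam x.1 * Wker pm J x A

/-- `P((y,i),A) = ∫₀^∞ λ(S_i(t,y)) e^{−Λ(y,i,t)} W((S_i(t,y),i),A) dt`. -/
def Pker {Y I : Type*} [MeasurableSpace Y] [Fintype I] (S : I → ℝ → Y → Y) (lam : Y → ℝ)
    (pm : I → I → Y → ℝ) (J : Kernel Y Y) (x : Y × I) (A : Set (Y × I)) : ℝ :=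
  ∫ t in Ioi (0:ℝ), lam (S x.2 t x.1) * exp (-(cumInt S lam x.1 x.2 t)) *
    Wker pm J (S x.2 t x.1, x.2) A

/-- `P_T f(x) = Σ_{n=0}^∞ P̄ⁿ(g_T · (P̄ h_T))((x,0))`. -/
def PTf {Y I : Type*} [MeasurableSpace Y] [MeasurableSpace I] (S : I → ℝ → Y → Y)
    (Pbar : Kernel (Y × I × ℝ) (Y × I × ℝ)) (f : Y × I → ℝ) (T : ℝ) (x : Y × I) : ℝ :=
  ∑' n : ℕ, kernelOpIter Pbar n
    (fun z => (Icc (0:ℝ) T).indicator (fun _ => (1:ℝ)) z.2.2 *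
        f (S z.2.1 (T - z.2.2) z.1, z.2.1) *
        ∫ w, (Ioi T).indicator (fun _ => (1:ℝ)) w.2.2 ∂(Pbar z))
    (x.1, x.2, 0)

/-- `ψ_f((y,i),t,T)`. -/
def psiF {Y I : Type*} [MeasurableSpace Y] [Fintype I] (S : I → ℝ → Y → Y) (lam : Y → ℝ)
    (pm : I → I → Y → ℝ) (J : Kernel Y Y) (f : Y × I → ℝ) (x : Y × I) (t T : ℝ) : ℝ :=
  lam (S x.2 t x.1) * exp (-(cumInt S lam x.1 x.2 t)) *
    ∫ u, ∑ j, pm x.2 j u * exp (-(cumInt S lam u j (T - t))) * f (S j (T - t) u, j)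
      ∂(J (S x.2 t x.1))

/-- The operator `G` acting on functions. -/
def Gop {Y I : Type*} (S : I → ℝ → Y → Y) (lam : Y → ℝ) (f : Y × I → ℝ) (x : Y × I) : ℝ :=
  ∫ t in Ioi (0:ℝ), lam (S x.2 t x.1) * exp (-(cumInt S lam x.1 x.2 t)) * f (S x.2 t x.1, x.2)

/-- The operator `W` acting on functions. -/
def Wop {Y I : Type*} [MeasurableSpace Y] [Fintype I]
    (pm : I → I → Y → ℝ) (J : Kernel Y Y) (f : Y × I → ℝ) (x : Y × I) : ℝ :=
  ∫ u, ∑ j, pm x.2 j u * f (u, j) ∂(J x.1)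

/-- Invariance of a measure for the semigroup `{P_T}`. -/
def isInvariantSemigroup {Y I : Type*} [MeasurableSpace Y] [MeasurableSpace I]
    (S : I → ℝ → Y → Y) (Pbar : Kernel (Y × I × ℝ) (Y × I × ℝ))
    (μ : Measure (Y × I)) : Prop :=
  ∀ T ≥ (0:ℝ), ∀ A : Set (Y × I), MeasurableSet A →
    ∫ x, PTf S Pbar (A.indicator fun _ => (1:ℝ)) T x ∂μ = (μ A).toReal

/-- Invariance of a measure for the kernel `P`. -/
def isInvariantP {Y I : Type*} [MeasurableSpace Y] [MeasurableSpace I] [Fintype I] (S : I → ℝ → Y → Y)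
    (lam : Y → ℝ) (pm : I → I → Y → ℝ) (J : Kernel Y Y) (μ : Measure (Y × I)) : Prop :=
  ∀ A : Set (Y × I), MeasurableSet A → ∫ x, Pker S lam pm J x A ∂μ = (μ A).toReal


open scoped ENNReal

theorem ENNReal.ofReal_integral_le_lintegral_ofReal {α : Type*} [MeasurableSpace α]
    {μ : Measure α} {f : α → ℝ} (hf : 0 ≤ f) :
    ENNReal.ofReal (∫ a, f a ∂μ) ≤ ∫⁻ a, ENNReal.ofReal (f a) ∂μ :=
  calc ENNReal.ofReal (∫ a, f a ∂μ) ≤ ‖∫ a, f a ∂μ‖ₑ := Real.ofReal_le_enorm _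
    _ ≤ ∫⁻ a, ‖f a‖ₑ ∂μ := enorm_integral_le_lintegral_enorm f
    _ = ∫⁻ a, ENNReal.ofReal (f a) ∂μ := by simp only [Real.enorm_eq_ofReal (hf _)]

theorem kIter_succ' {Z : Type*} [MeasurableSpace Z] (κ : Kernel Z Z) (n : ℕ) :
    kIter κ (n + 1) = kIter κ n ∘ₖ κ := by
  induction n with
  | zero => exact (Kernel.comp_id κ).trans (Kernel.id_comp κ).symm
  | succ n ih =>
    show κ ∘ₖ kIter κ (n + 1) = (κ ∘ₖ kIter κ n) ∘ₖ κ
    rw [ih, Kernel.comp_assoc]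

/-- Dominates the law of the waiting time to the next jump, from any state. -/
def waitBoundMeasure (lmin lmax : ℝ) : Measure ℝ :=
  (volume.restrict (Ioi 0)).withDensity fun r => ENNReal.ofReal (lmax * exp (-(lmin * r)))

def poissonBound (lmin lmax : ℝ) (n : ℕ) : ℝ → ℝ≥0∞ :=
  (Ici 0).indicator fun τ => ENNReal.ofReal (exp (-(lmin * τ)) * (lmax * τ) ^ n / n.factorial)

theorem measurable_poissonBound (lmin lmax : ℝ) (n : ℕ) :
    Measurable (poissonBound lmin lmax n) :=
  Measurable.indicator (by fun_prop) measurableSet_Ici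

theorem integral_Ioc_mul_sub_pow {c τ : ℝ} (hτ : 0 ≤ τ) (n : ℕ) :
    ∫ r in Ioc 0 τ, c * (τ - r) ^ n = c * τ ^ (n + 1) / (n + 1) := by
  rw [← intervalIntegral.integral_of_le hτ, intervalIntegral.integral_const_mul,
    intervalIntegral.integral_comp_sub_left (fun u => u ^ n) τ]
  simp [integral_pow, mul_div_assoc]

theorem ofReal_mul_poissonBound_sub {lmin lmax : ℝ} (hlmax : 0 ≤ lmax) (n : ℕ) (τ r : ℝ) :
    ENNReal.ofReal (lmax * exp (-(lmin * r))) * poissonBound lmin lmax n (τ - r) =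
      (Iic τ).indicator (fun r => ENNReal.ofReal
        (lmax ^ (n + 1) * exp (-(lmin * τ)) / n.factorial * (τ - r) ^ n)) r := by
  by_cases hr : r ≤ τ
  · have hτr : 0 ≤ τ - r := sub_nonneg.2 hr
    rw [poissonBound, indicator_of_mem (mem_Ici.2 hτr), indicator_of_mem (mem_Iic.2 hr),
      ← ENNReal.ofReal_mul (by positivity)]
    congr 1
    rw [show exp (-(lmin * τ)) = exp (-(lmin * r)) * exp (-(lmin * (τ - r))) by
      rw [← exp_add]; ring_nf, mul_pow]
    ring
  · have hτr : τ - r ∉ Ici 0 := fun h => hr (sub_nonneg.1 h)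
    rw [poissonBound, indicator_of_notMem hτr, indicator_of_notMem (mt mem_Iic.1 hr), mul_zero]

theorem lintegral_poissonBound_sub_waitBoundMeasure {lmin lmax : ℝ} (hlmax : 0 ≤ lmax) (n : ℕ)
    (τ : ℝ) :
    ∫⁻ r, poissonBound lmin lmax n (τ - r) ∂waitBoundMeasure lmin lmax =
      poissonBound lmin lmax (n + 1) τ := by
  have hmeas : Measurable fun r => poissonBound lmin lmax n (τ - r) :=
    (measurable_poissonBound lmin lmax n).comp (measurable_const.sub measurable_id)
  rw [waitBoundMeasure, lintegral_withDensity_eq_lintegral_mul _ (by fun_prop) hmeas, Pi.mul_def]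
  simp only [ofReal_mul_poissonBound_sub hlmax]
  rw [setLIntegral_indicator measurableSet_Iic, Iic_inter_Ioi]
  rcases le_or_gt 0 τ with hτ | hτ
  · rw [← ofReal_integral_eq_lintegral_ofReal, integral_Ioc_mul_sub_pow hτ, poissonBound,
      indicator_of_mem (mem_Ici.2 hτ)]
    · congr 1
      simp only [Nat.factorial_succ, Nat.cast_mul, Nat.cast_succ]
      field_simp
      ring
    · exact (continuous_const.mul ((continuous_const.sub continuous_id).pow n)).integrableOn_Ioc
    · filter_upwards [ae_restrict_mem measurableSet_Ioc] with r hr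
      have : 0 ≤ τ - r := sub_nonneg.2 hr.2
      positivity
  · rw [Ioc_eq_empty hτ.not_gt, Measure.restrict_empty, lintegral_zero_measure, poissonBound,
      indicator_of_notMem (mt mem_Ici.1 hτ.not_ge)]

/-- `P̄` is the transition kernel of the chain (post-jump state, jump time) of the piecewise
deterministic process. -/
def IsJumpChainKernel {Y I : Type*} [MeasurableSpace Y] [Fintype I] [MeasurableSpace I]
    (S : I → ℝ → Y → Y) (lam : Y → ℝ) (pm : I → I → Y → ℝ) (J : Kernel Y Y)
    (Pbar : Kernel (Y × I × ℝ) (Y × I × ℝ)) : Prop :=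
  ∀ y i, ∀ s ≥ (0:ℝ), ∀ A : Set (Y × I × ℝ), MeasurableSet A →
    ((Pbar (y, i, s)) A).toReal =
      ∫ t in Ioi (0:ℝ), lam (S i t y) * exp (-(cumInt S lam y i t)) *
        ∫ u, ∑ j, pm i j u * A.indicator (fun _ => (1:ℝ)) (u, j, s + t) ∂(J (S i t y))

section JumpChain

variable {Y : Type*} {I : Type*} {S : I → ℝ → Y → Y} {lam : Y → ℝ} {lmin lmax : ℝ}

theorem mul_le_cumInt [TopologicalSpace Y]
    (hS_cont : ∀ i, ContinuousOn (fun p : ℝ × Y => S i p.1 p.2) (Ici (0:ℝ) ×ˢ (univ : Set Y)))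
    (hlam_cont : Continuous lam) (hlmin : ∀ y, lmin ≤ lam y) (y : Y) (i : I) {τ : ℝ}
    (hτ : 0 ≤ τ) : lmin * τ ≤ cumInt S lam y i τ := by
  have hcont : ContinuousOn (fun h : ℝ => lam (S i h y)) (Icc 0 τ) :=
    hlam_cont.comp_continuousOn <| (hS_cont i).comp
      (continuous_id.prodMk continuous_const).continuousOn fun h hh => ⟨hh.1, mem_univ y⟩
  have hint : IntervalIntegrable (fun h => lam (S i h y)) volume 0 τ :=
    (hcont.mono (uIcc_of_le hτ).le).intervalIntegrable
  simpa [mul_comm, cumInt] using intervalIntegral.integral_mono_on hτ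
    intervalIntegrable_const hint fun h _ => hlmin (S i h y)

theorem ofReal_survival_le_poissonBound_zero
    (hΛ : ∀ y i τ, 0 ≤ τ → lmin * τ ≤ cumInt S lam y i τ) (t : ℝ) (y : Y) (i : I) (s : ℝ) :
    ENNReal.ofReal ((Icc 0 t).indicator (fun _ => (1:ℝ)) s * exp (-(cumInt S lam y i (t - s)))) ≤
      poissonBound lmin lmax 0 (t - s) := by
  by_cases hs : s ∈ Icc 0 t
  · have hts : 0 ≤ t - s := sub_nonneg.2 hs.2
    rw [indicator_of_mem hs, poissonBound, indicator_of_mem (mem_Ici.2 hts)]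
    simp only [one_mul, pow_zero, mul_one, Nat.factorial_zero, Nat.cast_one, div_one]
    exact ENNReal.ofReal_le_ofReal (exp_le_exp.2 (neg_le_neg (hΛ y i _ hts)))
  · simp [indicator_of_notMem hs]

variable [MeasurableSpace Y] [Fintype I] [MeasurableSpace I]
  {pm : I → I → Y → ℝ} {J : Kernel Y Y} [IsMarkovKernel J]
  {Pbar : Kernel (Y × I × ℝ) (Y × I × ℝ)} [IsFiniteKernel Pbar]
  (hPbar : IsJumpChainKernel S lam pm J Pbar) (hpm_sum : ∀ i y, ∑ j, pm i j y = 1)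
  (hΛ : ∀ y i τ, 0 ≤ τ → lmin * τ ≤ cumInt S lam y i τ)
  (hlmin : 0 ≤ lmin) (hlam_bd : ∀ y, lmin ≤ lam y ∧ lam y ≤ lmax)
include hPbar hpm_sum hΛ hlmin hlam_bd

theorem map_waitingTime_le_waitBoundMeasure (y : Y) (i : I) {s : ℝ} (hs : 0 ≤ s) :
    (Pbar (y, i, s)).map (fun w => w.2.2 - s) ≤ waitBoundMeasure lmin lmax := by
  have hlam_nonneg : ∀ y, 0 ≤ lam y := fun y => hlmin.trans (hlam_bd y).1
  have hwait : Measurable fun w : Y × I × ℝ => w.2.2 - s := by fun_prop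
  rw [Measure.le_iff]
  intro B hB
  have hjump : ∀ r u, ∑ j, pm i j u * ((fun w : Y × I × ℝ => w.2.2 - s) ⁻¹' B).indicator
      (fun _ => (1:ℝ)) (u, j, s + r) = B.indicator (fun _ => 1) r := fun r u => by
    have hind : ∀ j, ((fun w : Y × I × ℝ => w.2.2 - s) ⁻¹' B).indicator (fun _ => (1:ℝ))
        (u, j, s + r) = B.indicator (fun _ => 1) r := fun j => by
      change B.indicator (fun _ => (1:ℝ)) (s + r - s) = _
      rw [add_sub_cancel_left]
    simp only [hind, ← Finset.sum_mul, hpm_sum, one_mul]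
  rw [Measure.map_apply hwait hB, ← ENNReal.ofReal_toReal (measure_ne_top _ _),
    hPbar y i s hs _ (hwait hB), waitBoundMeasure, withDensity_apply _ hB,
    ← lintegral_indicator hB]
  simp only [hjump, integral_const, probReal_univ, one_smul]
  refine (ENNReal.ofReal_integral_le_lintegral_ofReal fun r => ?_).trans
    (setLIntegral_mono (by fun_prop) fun r hr => ?_)
  · exact mul_nonneg (mul_nonneg (hlam_nonneg _) (exp_pos _).le)
      (indicator_nonneg (fun _ _ => zero_le_one) _)
  · by_cases hrB : r ∈ B
    · simp only [indicator_of_mem hrB, mul_one]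
      exact ENNReal.ofReal_le_ofReal <| mul_le_mul (hlam_bd _).2
        (exp_le_exp.2 (neg_le_neg (hΛ y i r (le_of_lt hr)))) (exp_pos _).le
        ((hlam_nonneg y).trans (hlam_bd y).2)
    · simp [indicator_of_notMem hrB]

theorem ae_lt_waitingTime (y : Y) (i : I) {s : ℝ} (hs : 0 ≤ s) :
    ∀ᵐ w ∂(Pbar (y, i, s)), s < w.2.2 := by
  have hpos : ∀ᵐ r ∂(Pbar (y, i, s)).map (fun w => w.2.2 - s), 0 < r :=
    Measure.absolutelyContinuous_of_le
      (map_waitingTime_le_waitBoundMeasure hPbar hpm_sum hΛ hlmin hlam_bd y i hs)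
      (withDensity_absolutelyContinuous _ _ (ae_restrict_mem measurableSet_Ioi))
  filter_upwards [(ae_map_iff (by fun_prop) measurableSet_Ioi).1 hpos] with w hw
  exact sub_pos.1 hw

theorem lintegral_poissonBound_sub_le (t : ℝ) (n : ℕ) (y : Y) (i : I) {s : ℝ} (hs : 0 ≤ s) :
    ∫⁻ w, poissonBound lmin lmax n (t - w.2.2) ∂(Pbar (y, i, s)) ≤
      poissonBound lmin lmax (n + 1) (t - s) := by
  have hlmax : 0 ≤ lmax := (hlmin.trans (hlam_bd y).1).trans (hlam_bd y).2
  have hbound : Measurable fun r => poissonBound lmin lmax n (t - s - r) :=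
    (measurable_poissonBound lmin lmax n).comp (measurable_const.sub measurable_id)
  calc ∫⁻ w, poissonBound lmin lmax n (t - w.2.2) ∂(Pbar (y, i, s))
      = ∫⁻ w, poissonBound lmin lmax n (t - s - (w.2.2 - s)) ∂(Pbar (y, i, s)) := by
        simp only [sub_sub_sub_cancel_right]
    _ = ∫⁻ r, poissonBound lmin lmax n (t - s - r) ∂(Pbar (y, i, s)).map (fun w => w.2.2 - s) :=
        (lintegral_map hbound (by fun_prop)).symm
    _ ≤ ∫⁻ r, poissonBound lmin lmax n (t - s - r) ∂waitBoundMeasure lmin lmax :=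
        lintegral_mono'
          (map_waitingTime_le_waitBoundMeasure hPbar hpm_sum hΛ hlmin hlam_bd y i hs) le_rfl
    _ = poissonBound lmin lmax (n + 1) (t - s) :=
        lintegral_poissonBound_sub_waitBoundMeasure hlmax n _

theorem lintegral_kIter_poissonBound_sub_le (t : ℝ) (n : ℕ) (y : Y) (i : I) {s : ℝ}
    (hs : 0 ≤ s) :
    ∫⁻ q, poissonBound lmin lmax 0 (t - q.2.2) ∂(kIter Pbar n (y, i, s)) ≤
      poissonBound lmin lmax n (t - s) := by
  have hbound : Measurable fun q : Y × I × ℝ => poissonBound lmin lmax 0 (t - q.2.2) :=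
    (measurable_poissonBound lmin lmax 0).comp (by fun_prop)
  induction n generalizing y i s with
  | zero => exact (lintegral_dirac' _ hbound).le
  | succ n ih =>
    rw [kIter_succ', Kernel.lintegral_comp _ _ _ hbound]
    calc ∫⁻ w, ∫⁻ q, poissonBound lmin lmax 0 (t - q.2.2) ∂(kIter Pbar n w) ∂(Pbar (y, i, s))
        ≤ ∫⁻ w, poissonBound lmin lmax n (t - w.2.2) ∂(Pbar (y, i, s)) := by
          refine lintegral_mono_ae ?_
          filter_upwards [ae_lt_waitingTime hPbar hpm_sum hΛ hlmin hlam_bd y i hs] with w hw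
          exact ih w.1 w.2.1 (hs.trans hw.le)
      _ ≤ poissonBound lmin lmax (n + 1) (t - s) :=
          lintegral_poissonBound_sub_le hPbar hpm_sum hΛ hlmin hlam_bd t n y i hs

end JumpChain

theorem n_jumps_probability_bound_general
    {Y : Type*} [MetricSpace Y] [MeasurableSpace Y]
    {I : Type*} [Fintype I] [MeasurableSpace I]
    (S : I → ℝ → Y → Y)
    (hS_cont : ∀ i, ContinuousOn (fun p : ℝ × Y => S i p.1 p.2) (Ici (0:ℝ) ×ˢ (univ : Set Y)))
    (lam : Y → ℝ) (hlam_cont : Continuous lam) (lmin lmax : ℝ) (hlmin : 0 < lmin)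
    (hlam_bd : ∀ y, lmin ≤ lam y ∧ lam y ≤ lmax)
    (pm : I → I → Y → ℝ) (hpm_sum : ∀ i y, ∑ j, pm i j y = 1)
    (J : Kernel Y Y) [IsMarkovKernel J]
    (Pbar : Kernel (Y × I × ℝ) (Y × I × ℝ)) [IsMarkovKernel Pbar]
    (hPbar : ∀ y i, ∀ s ≥ (0:ℝ), ∀ A : Set (Y × I × ℝ), MeasurableSet A →
      ((Pbar (y, i, s)) A).toReal =
        ∫ t in Ioi (0:ℝ), lam (S i t y) * exp (-(cumInt S lam y i t)) *
          ∫ u, ∑ j, pm i j u * A.indicator (fun _ => (1:ℝ)) (u, j, s + t) ∂(J (S i t y))) :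
    ∀ x : Y × I, ∀ t ≥ (0:ℝ), ∀ n : ℕ,
      ∫ q : Y × I × ℝ,
          (Icc (0:ℝ) t).indicator (fun _ => (1:ℝ)) q.2.2 *
            exp (-(cumInt S lam q.1 q.2.1 (t - q.2.2)))
          ∂(kIter Pbar n (x.1, x.2, 0)) ≤ exp (-(lmin * t)) * (lmax * t) ^ n / n.factorial := by
  intro x t ht n
  have hΛ := mul_le_cumInt hS_cont hlam_cont (fun y => (hlam_bd y).1)
  have hlmax : 0 ≤ lmax := (hlmin.le.trans (hlam_bd x.1).1).trans (hlam_bd x.1).2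
  rw [← ENNReal.ofReal_le_ofReal_iff (by positivity)]
  calc ENNReal.ofReal (∫ q, (Icc 0 t).indicator (fun _ => (1:ℝ)) q.2.2 *
          exp (-(cumInt S lam q.1 q.2.1 (t - q.2.2))) ∂(kIter Pbar n (x.1, x.2, 0)))
      ≤ ∫⁻ q, ENNReal.ofReal ((Icc 0 t).indicator (fun _ => (1:ℝ)) q.2.2 *
          exp (-(cumInt S lam q.1 q.2.1 (t - q.2.2)))) ∂(kIter Pbar n (x.1, x.2, 0)) :=
        ENNReal.ofReal_integral_le_lintegral_ofReal fun q =>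
          mul_nonneg (indicator_nonneg (fun _ _ => zero_le_one) _) (exp_pos _).le
    _ ≤ ∫⁻ q, poissonBound lmin lmax 0 (t - q.2.2) ∂(kIter Pbar n (x.1, x.2, 0)) :=
        lintegral_mono fun q => ofReal_survival_le_poissonBound_zero hΛ t q.1 q.2.1 q.2.2
    _ ≤ poissonBound lmin lmax n (t - 0) :=
        lintegral_kIter_poissonBound_sub_le hPbar hpm_sum hΛ hlmin.le hlam_bd t n x.1 x.2 le_rfl
    _ = ENNReal.ofReal (exp (-(lmin * t)) * (lmax * t) ^ n / n.factorial) := by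
        rw [sub_zero, poissonBound, indicator_of_mem (mem_Ici.2 ht)]

theorem n_jumps_probability_bound
    {Y : Type*} [MetricSpace Y] [TopologicalSpace.SeparableSpace Y] [CompleteSpace Y]
    [MeasurableSpace Y] [BorelSpace Y]
    {I : Type*} [Fintype I] [Nonempty I] [TopologicalSpace I] [DiscreteTopology I]
    [MeasurableSpace I] [MeasurableSingletonClass I]
    (S : I → ℝ → Y → Y)
    (hS_cont : ∀ i, ContinuousOn (fun p : ℝ × Y => S i p.1 p.2) (Ici (0:ℝ) ×ˢ (univ : Set Y)))
    (hS_zero : ∀ i y, S i 0 y = y)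
    (hS_add : ∀ i, ∀ s ≥ (0:ℝ), ∀ t ≥ (0:ℝ), ∀ y, S i (s + t) y = S i s (S i t y))
    (lam : Y → ℝ) (hlam_cont : Continuous lam) (lmin lmax : ℝ) (hlmin : 0 < lmin)
    (hlam_bd : ∀ y, lmin ≤ lam y ∧ lam y ≤ lmax)
    (pm : I → I → Y → ℝ) (hpm_cont : ∀ i j, Continuous (pm i j))
    (hpm_mem : ∀ i j y, pm i j y ∈ Icc (0:ℝ) 1) (hpm_sum : ∀ i y, ∑ j, pm i j y = 1)
    (J : Kernel Y Y) [IsMarkovKernel J]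
    (Pbar : Kernel (Y × I × ℝ) (Y × I × ℝ)) [IsMarkovKernel Pbar]
    (hPbar : ∀ y i, ∀ s ≥ (0:ℝ), ∀ A : Set (Y × I × ℝ), MeasurableSet A →
      ((Pbar (y, i, s)) A).toReal =
        ∫ t in Ioi (0:ℝ), lam (S i t y) * exp (-(cumInt S lam y i t)) *
          ∫ u, ∑ j, pm i j u * A.indicator (fun _ => (1:ℝ)) (u, j, s + t) ∂(J (S i t y))) :
    ∀ x : Y × I, ∀ t ≥ (0:ℝ), ∀ n : ℕ,
      ∫ q : Y × I × ℝ,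
          (Icc (0:ℝ) t).indicator (fun _ => (1:ℝ)) q.2.2 *
            exp (-(cumInt S lam q.1 q.2.1 (t - q.2.2)))
          ∂(kIter Pbar n (x.1, x.2, 0)) ≤ exp (-(lmin * t)) * (lmax * t) ^ n / n.factorial :=
  n_jumps_probability_bound_general S hS_cont lam hlam_cont lmin lmax hlmin hlam_bd pm hpm_sum J
    Pbar hPbar
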